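/- Let d ∈ ℕ and let f, g, p : ℝ^d → ℝ be measurable functions such that f takes values in {−1,1}, |g(x)| ≤ 1 for all x, g ∈ L²(γ_d), p ∈ L²(γ_d), and ‖p‖_{L²(γ_d)} ≤ 1. Define q = (1/4)·(1 + p)². Then ‖q − (g+1)/2‖_{L¹(γ_d)} ≤ ‖p − g‖_{L²(γ_d)} + (1/2)·‖f − g‖_{L¹(γ_d)}. -/

import Mathlib

/-!
Write `q - (g + 1)/2 = φ·(p - g) + (g² - 1)/4` with `φ = (2 + g + p)/4`. Since `|2 + g| ≤ 3` and
`‖p‖₂ ≤ 1`, the weight satisfies `‖φ‖₂ ≤ 1`, so Hölder bounds the first term in `L¹` by `‖p - g‖₂`.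
For the second, `|1 - g²| = (1 - |g|)(1 + |g|) ≤ 2|f - g|` because `|f| = 1` and `|g| ≤ 1`.
-/

open MeasureTheory ProbabilityTheory Real
open scoped ENNReal

/-- The standard Gaussian measure on `ℝ^d`, as the `d`-fold product of the
standard Gaussian measure on `ℝ`. -/
noncomputable def gaussPi (d : ℕ) : Measure (Fin d → ℝ) :=
  Measure.pi fun _ => gaussianReal 0 1

instance (d : ℕ) : IsProbabilityMeasure (gaussPi d) := by
  unfold gaussPi
  infer_instance

theorem abs_sq_sub_one_le_two_mul_abs_sub {a b : ℝ} (ha : a = 1 ∨ a = -1) (hb : |b| ≤ 1) :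
    |b ^ 2 - 1| ≤ 2 * |a - b| := by
  obtain ⟨hb₁, hb₂⟩ := abs_le.mp hb
  rw [abs_of_nonpos (by nlinarith)]
  rcases ha with rfl | rfl
  · rw [abs_of_nonneg (by linarith)]
    nlinarith
  · rw [abs_of_nonpos (by linarith)]
    nlinarith

section

variable {α : Type*} [MeasurableSpace α] {μ : Measure α}

theorem eLpNorm_mul_le_of_eLpNorm_two_le_one {φ h : α → ℝ} (hφ : AEStronglyMeasurable φ μ)
    (hh : AEStronglyMeasurable h μ) (hφ₁ : eLpNorm φ 2 μ ≤ 1) :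
    eLpNorm (fun x => φ x * h x) 1 μ ≤ eLpNorm h 2 μ :=
  calc eLpNorm (φ • h) 1 μ ≤ eLpNorm φ 2 μ * eLpNorm h 2 μ := eLpNorm_smul_le_mul_eLpNorm hh hφ
    _ ≤ eLpNorm h 2 μ := mul_le_of_le_one_left' hφ₁

theorem eLpNorm_sq_sub_one_div_four_le {f g : α → ℝ} (hf : ∀ x, f x = 1 ∨ f x = -1)
    (hg : ∀ x, |g x| ≤ 1) (r : ℝ≥0∞) :
    eLpNorm (fun x => (g x ^ 2 - 1) / 4) r μ ≤ 1 / 2 * eLpNorm (fun x => f x - g x) r μ :=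
  calc eLpNorm (fun x => (g x ^ 2 - 1) / 4) r μ
      ≤ eLpNorm ((1 / 2 : ℝ) • fun x => f x - g x) r μ := eLpNorm_mono fun x => by
        have key := abs_sq_sub_one_le_two_mul_abs_sub (hf x) (hg x)
        simp only [Pi.smul_apply, smul_eq_mul, Real.norm_eq_abs, abs_div, abs_mul, abs_one,
          Nat.abs_ofNat]
        linarith
    _ = 1 / 2 * eLpNorm (fun x => f x - g x) r μ := by
      rw [eLpNorm_const_smul, Real.enorm_eq_ofReal (by norm_num),
        ENNReal.ofReal_div_of_pos (by norm_num)]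
      simp

theorem eLpNorm_le_ofReal_of_forall_abs_le [IsProbabilityMeasure μ] {f : α → ℝ} {C : ℝ}
    (hf : ∀ x, |f x| ≤ C) (p : ℝ≥0∞) : eLpNorm f p μ ≤ ENNReal.ofReal C := by
  simpa using eLpNorm_le_of_ae_bound (μ := μ) (p := p) (ae_of_all _ hf)

theorem eLpNorm_two_add_add_div_four_le_one [IsProbabilityMeasure μ] {g p : α → ℝ}
    (hgm : AEStronglyMeasurable g μ) (hpm : AEStronglyMeasurable p μ) (hg : ∀ x, |g x| ≤ 1)
    (hp : eLpNorm p 2 μ ≤ 1) : eLpNorm (fun x => (2 + g x + p x) / 4) 2 μ ≤ 1 := by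
  have hg₃ : eLpNorm (fun x => 2 + g x) 2 μ ≤ 3 := by
    refine (eLpNorm_le_ofReal_of_forall_abs_le (C := 3) (fun x => ?_) 2).trans_eq (by norm_num)
    calc |2 + g x| ≤ |2| + |g x| := abs_add_le _ _
      _ ≤ 3 := by rw [abs_two]; linarith [hg x]
  have hφ : (fun x => (2 + g x + p x) / 4) = (1 / 4 : ℝ) • ((fun x => 2 + g x) + p) := by
    funext x
    simp only [Pi.smul_apply, Pi.add_apply, smul_eq_mul]
    ring
  calc eLpNorm (fun x => (2 + g x + p x) / 4) 2 μ
      = ‖(1 / 4 : ℝ)‖ₑ * eLpNorm ((fun x => 2 + g x) + p) 2 μ := by rw [hφ, eLpNorm_const_smul]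
    _ ≤ ‖(1 / 4 : ℝ)‖ₑ * (3 + 1) := by
      gcongr
      exact (eLpNorm_add_le (by fun_prop) hpm one_le_two).trans (add_le_add hg₃ hp)
    _ = 1 := by
      rw [Real.enorm_eq_ofReal (by norm_num), ← ENNReal.ofReal_ofNat 3, ← ENNReal.ofReal_one,
        ← ENNReal.ofReal_add (by norm_num) (by norm_num), ← ENNReal.ofReal_mul (by norm_num)]
      norm_num

end

theorem q_close_to_smoothed_general (d : ℕ) (f g p : (Fin d → ℝ) → ℝ)
    (hgm : Measurable g) (hpm : Measurable p)
    (hf : ∀ x, f x = 1 ∨ f x = -1) (hg : ∀ x, |g x| ≤ 1)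
    (hpnorm : eLpNorm p 2 (gaussPi d) ≤ 1)
    (q : (Fin d → ℝ) → ℝ) (hq : q = fun x => (1 / 4) * (1 + p x) ^ 2) :
    eLpNorm (fun x => q x - (g x + 1) / 2) 1 (gaussPi d)
      ≤ eLpNorm (fun x => p x - g x) 2 (gaussPi d)
        + (1 / 2) * eLpNorm (fun x => f x - g x) 1 (gaussPi d) := by
  have hsplit : (fun x => q x - (g x + 1) / 2)
      = fun x => (2 + g x + p x) / 4 * (p x - g x) + (g x ^ 2 - 1) / 4 := by
    funext x
    rw [hq]
    ring
  rw [hsplit]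
  refine (eLpNorm_add_le (by fun_prop) (by fun_prop) le_rfl).trans (add_le_add ?_ ?_)
  · exact eLpNorm_mul_le_of_eLpNorm_two_le_one (by fun_prop) (by fun_prop)
      (eLpNorm_two_add_add_div_four_le_one hgm.aestronglyMeasurable hpm.aestronglyMeasurable
        hg hpnorm)
  · exact eLpNorm_sq_sub_one_div_four_le hf hg 1

/-- If `f` takes values in `{-1,1}`, `|g| ≤ 1` everywhere,
`g, p ∈ L²(γ_d)` with `‖p‖_{L²(γ_d)} ≤ 1`, and `q = (1/4)·(1 + p)²`, then
`‖q - (g+1)/2‖_{L¹(γ_d)} ≤ ‖p - g‖_{L²(γ_d)} + (1/2)·‖f - g‖_{L¹(γ_d)}`. -/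
theorem q_close_to_smoothed (d : ℕ) (f g p : (Fin d → ℝ) → ℝ)
    (hfm : Measurable f) (hgm : Measurable g) (hpm : Measurable p)
    (hf : ∀ x, f x = 1 ∨ f x = -1) (hg : ∀ x, |g x| ≤ 1)
    (hgL2 : MemLp g 2 (gaussPi d)) (hpL2 : MemLp p 2 (gaussPi d))
    (hpnorm : eLpNorm p 2 (gaussPi d) ≤ 1)
    (q : (Fin d → ℝ) → ℝ) (hq : q = fun x => (1 / 4) * (1 + p x) ^ 2) :
    eLpNorm (fun x => q x - (g x + 1) / 2) 1 (gaussPi d)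
      ≤ eLpNorm (fun x => p x - g x) 2 (gaussPi d)
        + (1 / 2) * eLpNorm (fun x => f x - g x) 1 (gaussPi d) :=
  q_close_to_smoothed_general d f g p hgm hpm hf hg hpnorm q hq
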